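/- Assume im(Q_t^{1/2}) = im(Q_T^{1/2}) for all t ∈ (0,T]. Then for every t ∈ (0,T), im(Q̂_t^{1/2}) = im(Q_t^{1/2}), where Q̂_t = Q_t^{1/2}(I − V_t^* V_t) Q_t^{1/2}. -/

import Mathlib

/-!
For self-adjoint operators, Douglas' lemma trades inclusions of ranges for norm domination.
Since `Q_T^{1/2}` and `Q_{T-t}^{1/2}` have the same range,
`‖Q_T^{1/2} w‖ ≤ K ‖Q_{T-t}^{1/2} w‖`, while `Q_T = Q_{T-t} + S_{T-t} Q_t S_{T-t}^*` splits
`‖Q_T^{1/2} w‖²` as `‖Q_{T-t}^{1/2} w‖² + ‖Q_t^{1/2} S_{T-t}^* w‖²`. Together these give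
`‖Q_t^{1/2} S_{T-t}^* w‖ ≤ k ‖Q_T^{1/2} w‖` for some `k < 1`, and since
`V_t^* Q_T^{1/2} = Q_t^{1/2} S_{T-t}^*` with `Q_T^{1/2}` of dense range, `‖V_t‖ ≤ k < 1`.
Then `‖Q̂_t^{1/2} y‖² = ‖Q_t^{1/2} y‖² - ‖V_t Q_t^{1/2} y‖²` lies between
`(1 - ‖V_t‖²) ‖Q_t^{1/2} y‖²` and `‖Q_t^{1/2} y‖²`, and Douglas' lemma applies in both directions.
-/

open ContinuousLinearMap

open scoped InnerProductSpace

section HahnBanach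

variable {𝕜 E F : Type*} [RCLike 𝕜] [NormedAddCommGroup E] [NormedSpace 𝕜 E]
  [NormedAddCommGroup F] [NormedSpace 𝕜 F]

theorem exists_dual_comp_eq_of_norm_le (B : E →L[𝕜] F) (φ : StrongDual 𝕜 E) {c : ℝ}
    (h : ∀ y, ‖φ y‖ ≤ c * ‖B y‖) : ∃ Φ : StrongDual 𝕜 F, Φ ∘L B = φ := by
  have hker : LinearMap.ker (B : E →ₗ[𝕜] F) ≤ LinearMap.ker (φ : E →ₗ[𝕜] 𝕜) := by
    intro y hy
    have hBy : B y = 0 := hy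
    simpa [hBy] using h y
  let e := LinearMap.quotKerEquivRange (B : E →ₗ[𝕜] F)
  let g := (LinearMap.ker (B : E →ₗ[𝕜] F)).liftQ (φ : E →ₗ[𝕜] 𝕜) hker ∘ₗ e.symm.toLinearMap
  have hg : ∀ y, g ⟨B y, LinearMap.mem_range_self _ y⟩ = φ y := by
    intro y
    have he : e.symm ⟨B y, LinearMap.mem_range_self _ y⟩ = Submodule.Quotient.mk y := by
      rw [LinearEquiv.symm_apply_eq]
      exact Subtype.ext (LinearMap.quotKerEquivRange_apply_mk _ _).symm
    simp [g, he]
  have hbound : ∀ v, ‖g v‖ ≤ c * ‖v‖ := by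
    rintro ⟨_, y, rfl⟩
    rw [Submodule.coe_norm]
    exact (hg y).symm ▸ h y
  obtain ⟨Φ, hΦ, -⟩ := exists_extension_norm_eq _ (g.mkContinuous c hbound)
  exact ⟨Φ, ext fun y => (hΦ ⟨B y, LinearMap.mem_range_self _ y⟩).trans (hg y)⟩

end HahnBanach

section ClosedGraph

variable {𝕜 E F G : Type*} [NontriviallyNormedField 𝕜]
  [NormedAddCommGroup E] [NormedSpace 𝕜 E] [CompleteSpace E]
  [NormedAddCommGroup F] [NormedSpace 𝕜 F] [CompleteSpace F]
  [NormedAddCommGroup G] [NormedSpace 𝕜 G]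

theorem exists_comp_eq_of_range_subset {B : E →L[𝕜] G} {C : F →L[𝕜] G}
    (hC : Function.Injective C) (h : Set.range B ⊆ Set.range C) :
    ∃ R : E →L[𝕜] F, C ∘L R = B := by
  let R := (LinearEquiv.ofInjective (C : F →ₗ[𝕜] G) hC).symm.toLinearMap ∘ₗ
    (B : E →ₗ[𝕜] G).codRestrict _ fun u => h ⟨u, rfl⟩
  have hR : ∀ u, C (R u) = B u := fun u =>
    congrArg Subtype.val ((LinearEquiv.ofInjective (C : F →ₗ[𝕜] G) hC).apply_symm_apply _)
  have hgraph : (R.graph : Set (E × F)) = {p | C p.2 = B p.1} := by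
    ext p
    simp only [SetLike.mem_coe, LinearMap.mem_graph_iff, Set.mem_ofPred_eq, ← hR, hC.eq_iff]
  have hclosed : IsClosed (R.graph : Set (E × F)) :=
    hgraph ▸ isClosed_eq (by fun_prop) (by fun_prop)
  exact ⟨⟨R, R.continuous_of_isClosed_graph hclosed⟩, ext hR⟩

end ClosedGraph

section Douglas

variable {𝕜 E F G : Type*} [RCLike 𝕜]
  [NormedAddCommGroup E] [InnerProductSpace 𝕜 E] [CompleteSpace E]
  [NormedAddCommGroup F] [InnerProductSpace 𝕜 F] [CompleteSpace F]
  [NormedAddCommGroup G] [InnerProductSpace 𝕜 G] [CompleteSpace G]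

theorem range_adjoint_subset_of_norm_le {A : E →L[𝕜] G} {B : E →L[𝕜] F} {c : ℝ}
    (h : ∀ y, ‖A y‖ ≤ c * ‖B y‖) : Set.range (adjoint A) ⊆ Set.range (adjoint B) := by
  rintro _ ⟨u, rfl⟩
  obtain ⟨Φ, hΦ⟩ := exists_dual_comp_eq_of_norm_le B (innerSL 𝕜 (adjoint A u)) (c := ‖u‖ * c)
    fun y => calc
      ‖⟪adjoint A u, y⟫_𝕜‖ = ‖⟪u, A y⟫_𝕜‖ := by rw [adjoint_inner_left]
      _ ≤ ‖u‖ * ‖A y‖ := norm_inner_le_norm _ _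
      _ ≤ ‖u‖ * (c * ‖B y‖) := by gcongr; exact h y
      _ = ‖u‖ * c * ‖B y‖ := by ring
  refine ⟨(InnerProductSpace.toDual 𝕜 F).symm Φ, ext_inner_right 𝕜 fun v => ?_⟩
  rw [adjoint_inner_left, InnerProductSpace.toDual_symm_apply, ← comp_apply, hΦ,
    innerSL_apply_apply]

theorem exists_norm_adjoint_le_of_range_subset {A : E →L[𝕜] G} {B : F →L[𝕜] G}
    (hB : Function.Injective B) (h : Set.range A ⊆ Set.range B) :
    ∃ K, ∀ w, ‖adjoint A w‖ ≤ K * ‖adjoint B w‖ := by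
  obtain ⟨R, rfl⟩ := exists_comp_eq_of_range_subset hB h
  exact ⟨‖adjoint R‖, fun w => by rw [adjoint_comp, comp_apply]; exact le_opNorm _ _⟩

theorem IsSelfAdjoint.range_subset_of_norm_le {A B : E →L[𝕜] E} (hA : IsSelfAdjoint A)
    (hB : IsSelfAdjoint B) {c : ℝ} (h : ∀ y, ‖A y‖ ≤ c * ‖B y‖) :
    Set.range A ⊆ Set.range B := by
  simpa only [hA.adjoint_eq, hB.adjoint_eq] using range_adjoint_subset_of_norm_le h

end Douglas

theorem exists_lt_one_le_mul_of_sq_eq_add {ι : Type*} {a b c : ι → ℝ} {K : ℝ}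
    (ha : ∀ i, 0 ≤ a i) (hb : ∀ i, 0 ≤ b i) (habc : ∀ i, a i ^ 2 = b i ^ 2 + c i ^ 2)
    (hK : ∀ i, a i ≤ K * b i) : ∃ k, 0 ≤ k ∧ k < 1 ∧ ∀ i, c i ≤ k * a i := by
  set L := max K 1
  have hL : 0 < L ^ 2 := by positivity
  have hk : 0 ≤ 1 - 1 / L ^ 2 := by
    rw [sub_nonneg, div_le_one hL]
    nlinarith [le_max_right K 1]
  refine ⟨√(1 - 1 / L ^ 2), Real.sqrt_nonneg _, ?_,
    fun i => le_of_sq_le_sq ?_ (mul_nonneg (Real.sqrt_nonneg _) (ha i))⟩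
  · rw [Real.sqrt_lt' one_pos, one_pow, sub_lt_self_iff]
    positivity
  have hab : a i ^ 2 / L ^ 2 ≤ b i ^ 2 := by
    rw [div_le_iff₀ hL, mul_comm, ← mul_pow]
    exact pow_le_pow_left₀ (ha i)
      ((hK i).trans (mul_le_mul_of_nonneg_right (le_max_left _ _) (hb i))) 2
  calc c i ^ 2 = a i ^ 2 - b i ^ 2 := by rw [habc]; ring
    _ ≤ a i ^ 2 - a i ^ 2 / L ^ 2 := by gcongr
    _ = (√(1 - 1 / L ^ 2) * a i) ^ 2 := by rw [mul_pow, Real.sq_sqrt hk]; ring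

theorem opNorm_le_of_denseRange {𝕜 E F G : Type*} [NontriviallyNormedField 𝕜]
    [SeminormedAddCommGroup F] [NormedSpace 𝕜 F] [SeminormedAddCommGroup G] [NormedSpace 𝕜 G]
    [TopologicalSpace E] {A : F →L[𝕜] G} {B : E → F} (hB : DenseRange B) {c : ℝ} (hc : 0 ≤ c)
    (h : ∀ w, ‖A (B w)‖ ≤ c * ‖B w‖) : ‖A‖ ≤ c :=
  opNorm_le_bound A hc fun x => hB.induction_on x (isClosed_le (by fun_prop) (by fun_prop)) h

section SelfAdjoint

variable {𝕜 E : Type*} [RCLike 𝕜] [NormedAddCommGroup E] [InnerProductSpace 𝕜 E]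
  [CompleteSpace E]

theorem IsSelfAdjoint.norm_sq_apply {P : E →L[𝕜] E} (hP : IsSelfAdjoint P) (w : E) :
    ‖P w‖ ^ 2 = RCLike.re ⟪(P ∘L P) w, w⟫_𝕜 := by
  rw [apply_norm_sq_eq_inner_adjoint_left, hP.adjoint_eq]

theorem norm_sq_eq_add_of_comp_self_eq {P₁ P₂ P₃ S : E →L[𝕜] E} (h₁ : IsSelfAdjoint P₁)
    (h₂ : IsSelfAdjoint P₂) (h₃ : IsSelfAdjoint P₃)
    (h : P₁ ∘L P₁ = P₂ ∘L P₂ + S ∘L ((P₃ ∘L P₃) ∘L adjoint S)) (w : E) :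
    ‖P₁ w‖ ^ 2 = ‖P₂ w‖ ^ 2 + ‖P₃ (adjoint S w)‖ ^ 2 := by
  rw [show P₃ (adjoint S w) = (P₃ ∘L adjoint S) w from rfl, h₁.norm_sq_apply, h₂.norm_sq_apply,
    apply_norm_sq_eq_inner_adjoint_left, adjoint_comp, adjoint_adjoint, h₃.adjoint_eq, h,
    add_apply, inner_add_left, map_add]
  rfl

theorem IsSelfAdjoint.range_eq_of_comp_self_eq_of_norm_lt_one {P P' V : E →L[𝕜] E}
    (hP : IsSelfAdjoint P) (hP' : IsSelfAdjoint P')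
    (h : P' ∘L P' = P ∘L ((1 - adjoint V ∘L V) ∘L P)) (hV : ‖V‖ < 1) :
    Set.range P' = Set.range P := by
  have hnorm : ∀ y, ‖P' y‖ ^ 2 = ‖P y‖ ^ 2 - ‖V (P y)‖ ^ 2 := by
    intro y
    rw [hP'.norm_sq_apply, h, comp_apply, ← hP.adjoint_eq, adjoint_inner_left, hP.adjoint_eq,
      comp_apply, sub_apply, inner_sub_left, map_sub, one_apply_eq_self,
      apply_norm_sq_eq_inner_adjoint_left V, inner_self_eq_norm_sq]
  have hm : 0 < 1 - ‖V‖ ^ 2 := by nlinarith [norm_nonneg V]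
  have hupper : ∀ y, ‖P' y‖ ≤ 1 * ‖P y‖ := fun y => by
    rw [one_mul]
    exact le_of_sq_le_sq (by nlinarith [hnorm y]) (norm_nonneg _)
  have hlower : ∀ y, ‖P y‖ ≤ (√(1 - ‖V‖ ^ 2))⁻¹ * ‖P' y‖ := fun y => by
    rw [← div_eq_inv_mul, le_div_iff₀ (Real.sqrt_pos.2 hm)]
    refine le_of_sq_le_sq ?_ (norm_nonneg _)
    have hVP := pow_le_pow_left₀ (norm_nonneg _) (V.le_opNorm (P y)) 2
    rw [mul_pow, Real.sq_sqrt hm.le, hnorm y]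
    nlinarith
  exact (hP'.range_subset_of_norm_le hP hupper).antisymm (hP.range_subset_of_norm_le hP' hlower)

end SelfAdjoint

/-- Assume `im(Q_t^{1/2}) = im(Q_T^{1/2})` for all `t ∈ (0,T]`.  Then for every `t ∈ (0,T)`,
`im(Q̂_t^{1/2}) = im(Q_t^{1/2})`, where `Q̂_t = Q_t^{1/2}(I − V_t^* V_t) Q_t^{1/2}`. -/
theorem bridge_covariance_range
    {H : Type*} [NormedAddCommGroup H] [InnerProductSpace ℝ H] [CompleteSpace H]
    {T : ℝ} (hT : 0 < T)
    (S : ℝ → H →L[ℝ] H) (Qop Qhalf V Qhat Qhathalf : ℝ → H →L[ℝ] H)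
    (hsa : ∀ t ∈ Set.Ioc (0:ℝ) T, IsSelfAdjoint (Qhalf t))
    (hsq : ∀ t ∈ Set.Ioc (0:ℝ) T, (Qhalf t).comp (Qhalf t) = Qop t)
    (hinj : ∀ t ∈ Set.Ioc (0:ℝ) T, Function.Injective (Qhalf t))
    (hdense : ∀ t ∈ Set.Ioc (0:ℝ) T, DenseRange (Qhalf t))
    (hV : ∀ t ∈ Set.Ioo (0:ℝ) T, (Qhalf T).comp (V t) = (S (T - t)).comp (Qhalf t))
    (hid : ∀ t ∈ Set.Ico (0:ℝ) T,
      Qop T = Qop t + (S t).comp ((Qop (T - t)).comp (ContinuousLinearMap.adjoint (S t))))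
    (hQhat : ∀ t ∈ Set.Ioo (0:ℝ) T, Qhat t = (Qhalf t).comp
      (((1 : H →L[ℝ] H) - (ContinuousLinearMap.adjoint (V t)).comp (V t)).comp (Qhalf t)))
    (hhatsa : ∀ t ∈ Set.Ioo (0:ℝ) T, IsSelfAdjoint (Qhathalf t))
    (hhatsq : ∀ t ∈ Set.Ioo (0:ℝ) T, (Qhathalf t).comp (Qhathalf t) = Qhat t)
    (hrangeEq : ∀ t ∈ Set.Ioc (0:ℝ) T, Set.range (Qhalf t) = Set.range (Qhalf T)) :
    ∀ t ∈ Set.Ioo (0:ℝ) T, Set.range (Qhathalf t) = Set.range (Qhalf t) := by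
  intro t ht
  have hT' : T ∈ Set.Ioc 0 T := ⟨hT, le_rfl⟩
  have ht' : t ∈ Set.Ioc 0 T := Set.Ioo_subset_Ioc_self ht
  have hs : T - t ∈ Set.Ioc 0 T := ⟨by linarith [ht.2], by linarith [ht.1]⟩
  have hsplit (w : H) :
      ‖Qhalf T w‖ ^ 2 = ‖Qhalf (T - t) w‖ ^ 2 + ‖Qhalf t (adjoint (S (T - t)) w)‖ ^ 2 := by
    have h := hid (T - t) ⟨hs.1.le, by linarith [ht.1]⟩
    rw [sub_sub_cancel, ← hsq T hT', ← hsq _ hs, ← hsq t ht'] at h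
    exact norm_sq_eq_add_of_comp_self_eq (hsa T hT') (hsa _ hs) (hsa t ht') h w
  obtain ⟨K, hK⟩ : ∃ K, ∀ w, ‖Qhalf T w‖ ≤ K * ‖Qhalf (T - t) w‖ := by
    simpa only [(hsa T hT').adjoint_eq, (hsa _ hs).adjoint_eq] using
      exists_norm_adjoint_le_of_range_subset (hinj _ hs) (hrangeEq _ hs).symm.subset
  obtain ⟨k, hk0, hk1, hk⟩ := exists_lt_one_le_mul_of_sq_eq_add
    (fun _ => norm_nonneg _) (fun _ => norm_nonneg _) hsplit hK
  have hVadj : adjoint (V t) ∘L Qhalf T = Qhalf t ∘L adjoint (S (T - t)) := by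
    simpa only [adjoint_comp, (hsa T hT').adjoint_eq, (hsa t ht').adjoint_eq] using
      congrArg adjoint (hV t ht)
  have hVnorm : ‖V t‖ < 1 := by
    rw [← LinearIsometryEquiv.norm_map adjoint]
    refine (opNorm_le_of_denseRange (hdense T hT') hk0 fun w => ?_).trans_lt hk1
    rw [← comp_apply, hVadj]
    exact hk w
  exact (hsa t ht').range_eq_of_comp_self_eq_of_norm_lt_one (hhatsa t ht)
    ((hhatsq t ht).trans (hQhat t ht)) hVnorm
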